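/- arXiv:0912.1182 — 2 statements merged into one kernel-verified Lean document; each statement's English description precedes it below -/
import Mathlib

section
/- Let G be a finite multigraph given by a finite edge set E, a finite vertex set V, and an incidence map φ : E → Sym2(V), with a linear order on E. Suppose e and f are parallel edges (e ≠ f and φ(e) = φ(f)) with e < f, and let X ⊆ E. Then X includes no broken circuit of G if and only if X ⊆ E \ {e} and X includes no broken circuit of the graph G − e obtained by deleting the edge e. -/
/-- A cycle of length `n+1` in the multigraph with incidence map `φ : E → Sym2 V`:
vertices `v 0, …, v n` are pairwise distinct, edges `ed 0, …, ed n` are pairwise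
distinct, and the `i`-th edge joins `v i` and `v (i+1)` (indices mod `n+1`). -/
def IsMultiCycle {V E : Type*} (φ : E → Sym2 V) {n : ℕ}
    (v : Fin (n + 1) → V) (ed : Fin (n + 1) → E) : Prop :=
  Function.Injective v ∧ Function.Injective ed ∧ ∀ i, φ (ed i) = s(v i, v (i + 1))

/-- `B` is a broken circuit of the multigraph with incidence map `φ : E → Sym2 V`,
restricted to the edges in `A`: `B` arises from the edge set of a cycle all of whose
edges lie in `A` by removing its maximum edge (w.r.t. the linear order on `E`). -/
def IsMultiBrokenCircuit {V E : Type*} [LinearOrder E] (φ : E → Sym2 V)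
    (A : Set E) (B : Set E) : Prop :=
  ∃ (n : ℕ) (v : Fin (n + 1) → V) (ed : Fin (n + 1) → E),
    (∀ i, ed i ∈ A) ∧ IsMultiCycle φ v ed ∧
    ∃ fm, (∃ i, ed i = fm) ∧ (∀ i, ed i ≤ fm) ∧ B = {g | ∃ i, ed i = g} \ {fm}

lemma exists_bc_of_mem {V E : Type*} [LinearOrder E] (φ : E → Sym2 V)
    (e f : E) (hne : e ≠ f) (hpar : φ e = φ f) (hlt : e < f)
    (X : Set E) (he : e ∈ X) :
    ∃ B, IsMultiBrokenCircuit φ Set.univ B ∧ B ⊆ X := by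
  obtain ⟨a, b, hab⟩ : ∃ a b, φ e = s(a, b) :=
    @Sym2.ind V (fun z => ∃ a b, z = s(a, b)) (fun a b => ⟨a, b, rfl⟩) (φ e)
  by_cases hab' : a = b
  · refine ⟨∅, ⟨0, fun _ => a, fun _ => e, fun _ => trivial,
      ⟨fun x y _ => by fin_cases x <;> fin_cases y <;> rfl,
        fun x y _ => by fin_cases x <;> fin_cases y <;> rfl,
        fun i => by simp [hab, hab']⟩,
      e, ⟨0, rfl⟩, fun _ => le_refl e, ?_⟩, by simp⟩
    ext g
    simp only [Set.mem_empty_iff_false, Set.mem_diff, Set.mem_setOf_eq,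
      Set.mem_singleton_iff]
    constructor
    · intro h; exact h.elim
    · rintro ⟨⟨i, rfl⟩, hg⟩; exact hg rfl
  · refine ⟨{e}, ⟨1, ![a, b], ![e, f], fun _ => trivial,
      ⟨?_, ?_, ?_⟩, f, ⟨1, rfl⟩, ?_, ?_⟩, by simpa⟩
    · intro x y hxy; fin_cases x <;> fin_cases y <;> simp_all
    · intro x y hxy; fin_cases x <;> fin_cases y <;> simp_all
    · intro i; fin_cases i
      · simpa using hab
      · show φ f = s(b, ![a,b] (1+1))
        have : (1 + 1 : Fin 2) = 0 := rfl
        rw [this]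
        show φ f = s(b, a)
        rw [← hpar, hab, Sym2.eq_swap]
    · intro i; fin_cases i
      · exact le_of_lt hlt
      · exact le_refl f
    · ext g
      simp only [Set.mem_singleton_iff, Set.mem_diff, Set.mem_setOf_eq]
      constructor
      · rintro rfl; exact ⟨⟨0, rfl⟩, hne⟩
      · rintro ⟨⟨i, rfl⟩, hg⟩
        fin_cases i
        · rfl
        · simp at hg


/-- If `e < f` are parallel edges of a finite multigraph `G = (V, E, φ)`, then a set
`X ⊆ E` includes no broken circuit of `G` iff `X ⊆ E \ {e}` and `X` includes no broken
circuit of `G - e`. -/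
theorem parallel_min_broken_circuit {V E : Type*} [Finite V] [Finite E] [LinearOrder E]
    (φ : E → Sym2 V) (e f : E) (hne : e ≠ f) (hpar : φ e = φ f) (hlt : e < f)
    (X : Set E) :
    (¬ ∃ B, IsMultiBrokenCircuit φ Set.univ B ∧ B ⊆ X) ↔
      (X ⊆ {e}ᶜ ∧ ¬ ∃ B, IsMultiBrokenCircuit φ {e}ᶜ B ∧ B ⊆ X) := by
  constructor
  · intro h
    constructor
    · intro x hx
      simp only [Set.mem_compl_iff, Set.mem_singleton_iff]
      rintro rfl
      exact h (exists_bc_of_mem φ x f hne hpar hlt X hx)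
    · rintro ⟨B, ⟨n, v, ed, _, hc, hfm⟩, hBX⟩
      exact h ⟨B, ⟨n, v, ed, fun _ => trivial, hc, hfm⟩, hBX⟩
  · rintro ⟨hXe, h⟩ ⟨B, ⟨n, v, ed, _, ⟨hv, hed, hφ⟩, fm, ⟨i₀, hi₀⟩, hmax, hB⟩, hBX⟩
    by_cases hmem : ∃ j, ed j = e
    · obtain ⟨j, hj⟩ := hmem
      -- fm = e
      have hfme : fm = e := by
        by_contra hfme
        have heB : e ∈ B := by
          rw [hB]
          exact ⟨⟨j, hj⟩, fun hc => hfme ((Set.mem_singleton_iff.mp hc).symm)⟩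
        exact (hXe (hBX heB)) rfl
      subst hfme
      -- replace ed j by f
      set ed' := Function.update ed j f with hed'
      have hed'j : ed' j = f := Function.update_self j f ed
      have hed'ne : ∀ k, k ≠ j → ed' k = ed k := fun k hk =>
        Function.update_of_ne hk f ed
      have hltk : ∀ k, k ≠ j → ed k < f := fun k hk =>
        lt_of_le_of_lt (hmax k) hlt
      refine h ⟨B, ⟨n, v, ed', ?_, ⟨hv, ?_, ?_⟩, f, ⟨j, hed'j⟩, ?_, ?_⟩, hBX⟩
      · intro k
        simp only [Set.mem_compl_iff, Set.mem_singleton_iff]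
        by_cases hk : k = j
        · subst hk; rw [hed'j]; exact hne.symm
        · rw [hed'ne k hk]
          intro hc
          exact hk (hed (hc.trans hj.symm))
      · intro x y hxy
        by_cases hx : x = j <;> by_cases hy : y = j
        · rw [hx, hy]
        · exfalso
          rw [hx, hed'j, hed'ne y hy] at hxy
          exact absurd hxy.symm (ne_of_lt (hltk y hy))
        · exfalso
          rw [hy, hed'j, hed'ne x hx] at hxy
          exact absurd hxy (ne_of_lt (hltk x hx))
        · rw [hed'ne x hx, hed'ne y hy] at hxy
          exact hed hxy
      · intro i
        by_cases hi : i = j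
        · subst hi; rw [hed'j, ← hpar, ← hj]; exact hφ i
        · rw [hed'ne i hi]; exact hφ i
      · intro k
        by_cases hk : k = j
        · subst hk; rw [hed'j]
        · rw [hed'ne k hk]; exact le_of_lt (hltk k hk)
      · rw [hB]
        ext g
        simp only [Set.mem_diff, Set.mem_setOf_eq, Set.mem_singleton_iff]
        constructor
        · rintro ⟨⟨k, rfl⟩, hg⟩
          have hk : k ≠ j := fun hc => hg (hc ▸ hj)
          exact ⟨⟨k, hed'ne k hk⟩, ne_of_lt (hltk k hk)⟩
        · rintro ⟨⟨k, rfl⟩, hg⟩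
          have hk : k ≠ j := fun hc => hg (hc ▸ hed'j)
          rw [hed'ne k hk]
          exact ⟨⟨k, rfl⟩, fun hc => hk (hed (hc.trans hj.symm))⟩
    · push_neg at hmem
      exact h ⟨B, ⟨n, v, ed, fun k => fun hc =>
        hmem k (Set.mem_singleton_iff.mp (Set.notMem_compl_iff.mp (fun h2 => h2 hc)) ), ⟨hv, hed, hφ⟩, fm, ⟨i₀, hi₀⟩, hmax, hB⟩, hBX⟩
end

section
/- Let G be a finite simple graph whose edge set carries a linear order, let e be the minimum edge of G, and let Y be a subset of the edge set of G − e (the graph obtained from G by deleting e). Then Y includes a broken circuit of G − e if and only if Y includes a broken circuit of G. -/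
attribute [-instance] Sym2.instPartialOrder

open SimpleGraph

/-- `B` is a broken circuit of the simple graph `G` (whose edges are compared via the
linear order on `Sym2 V`): `B` is obtained from the edge set of a cycle of `G` by
removing its maximum edge. -/
def IsBrokenCircuit {V : Type*} [LinearOrder (Sym2 V)] (G : SimpleGraph V)
    (B : Set (Sym2 V)) : Prop :=
  ∃ (u : V) (w : G.Walk u u), w.IsCycle ∧
    ∃ fm ∈ w.edges, (∀ g ∈ w.edges, g ≤ fm) ∧ B = {g | g ∈ w.edges} \ {fm}

/-- If `e` is the minimum edge of a finite simple graph `G` and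
`Y ⊆ E(G - e)`, then `Y` includes a broken circuit of `G - e` iff `Y` includes a
broken circuit of `G`. -/
theorem deletion_broken_circuit {V : Type*} [Fintype V] [LinearOrder (Sym2 V)]
    (G : SimpleGraph V) (e : Sym2 V) (he : e ∈ G.edgeSet)
    (hmin : ∀ f ∈ G.edgeSet, e ≤ f)
    (Y : Set (Sym2 V)) (hY : Y ⊆ (G.deleteEdges {e}).edgeSet) :
    (∃ B, IsBrokenCircuit (G.deleteEdges {e}) B ∧ B ⊆ Y) ↔
      (∃ B, IsBrokenCircuit G B ∧ B ⊆ Y) := by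
  constructor
  · rintro ⟨B, ⟨u, w, hc, fm, hfm, hmax, hB⟩, hBY⟩
    have hle : G.deleteEdges {e} ≤ G := G.deleteEdges_le _
    refine ⟨B, ⟨u, w.mapLe hle, hc.mapLe hle, fm, ?_, ?_, ?_⟩, hBY⟩
    · simpa [Walk.mapLe] using hfm
    · intro g hg; apply hmax; simpa [Walk.mapLe] using hg
    · simp only [hB, Walk.mapLe]
      congr 1
      ext g
      simp
  · rintro ⟨B, ⟨u, w, hc, fm, hfm, hmax, hB⟩, hBY⟩
    have hew : e ∉ w.edges := by
      intro hew
      -- e ∉ B since B ⊆ Y ⊆ edgeSet of deleteEdges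
      have heB : e ∉ B := by
        intro h
        have := hY (hBY h)
        rw [edgeSet_deleteEdges] at this
        exact this.2 rfl
      have hef : e = fm := by
        by_contra hne
        exact heB (by rw [hB]; exact ⟨hew, hne⟩)
      -- all edges of w are in G.edgeSet, hence ≥ e = fm ≥ them, so all equal e
      have hall : ∀ g ∈ w.edges, g = e := fun g hg =>
        le_antisymm (hef ▸ hmax g hg) (hmin g (w.edges_subset_edgeSet hg))
      have hnd := hc.edges_nodup
      have h3 : 3 ≤ w.length := hc.three_le_length
      rw [← w.length_edges] at h3
      have h0 : w.edges.get ⟨0, by omega⟩ = e := hall _ (List.get_mem _ _)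
      have h1 : w.edges.get ⟨1, by omega⟩ = e := hall _ (List.get_mem _ _)
      have := (List.Nodup.get_inj_iff hnd).mp (h0.trans h1.symm)
      simp at this
    have hwe : ∀ g ∈ w.edges, g ∈ (G.deleteEdges {e}).edgeSet := by
      intro g hg
      rw [edgeSet_deleteEdges]
      exact ⟨w.edges_subset_edgeSet hg, fun h => hew (h ▸ hg)⟩
    refine ⟨B, ⟨u, w.transfer _ hwe, hc.transfer hwe, fm, ?_, ?_, ?_⟩, hBY⟩
    · rwa [Walk.edges_transfer]
    · intro g hg; exact hmax g (by rwa [Walk.edges_transfer] at hg)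
    · rw [hB, Walk.edges_transfer]
end
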